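/- (Algebra of mixed Gevrey bounds.) Let λ ≥ 1, μ > 2, R, R' > 0, and let C₁, C₂ > 0. Suppose two doubly-indexed families of reals (d₁)_{n}^{k} and (d₂)_{n}^{k}, for k ≤ k₀ and n ≤ n₀, satisfy |dᵢ(n, k)| ≤ Cᵢ (λn + k)!/(R^k R'^{λn} (λn + k + 1)^μ). Define the Leibniz product π(d₁, d₂)(n, k) := Σ_{0≤j≤k} Σ_{0≤i≤n} (k choose j)(n choose i) d₁(i, j) d₂(n−i, k−j). Then |π(d₁, d₂)(n, k)| ≤ K C₁ C₂ (λn + k)!/(R^k R'^{λn} (λn + k + 1)^μ) for all k ≤ k₀, n ≤ n₀, where K = 2λ·2^{μ}·Σ_{j,i ≥ 0} 1/(λi + j + 1)^μ. -/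

import Mathlib

/-!
Each term of the Leibniz product is bounded through two estimates. First, Vandermonde gives
`C(k,j) C(n,i) ≤ C(n+k, i+j)`, and since the Beta function `B(x,y) = Γ(x)Γ(y)/Γ(x+y)` is
antitone in each argument (log-convexity of `Γ`), this integer binomial passes to the Gamma
quotient at the larger real arguments `λi + j`, `λ(n-i) + k - j` at the price of the factor
`λ ≥ (λn + k + 1)/(n + k + 1)`. This turns the product of the two Gevrey weights into `λ` times
the Gevrey weight at `(n, k)`, times `(λn+k+1)^μ / ((λi+j+1)^μ (λ(n-i)+k-j+1)^μ)`. Second,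
the larger of the two factors in that denominator is at least `2^{-μ} (λn+k+1)^μ`, so the double
sum of these ratios is at most `2^μ` times two copies of `Σ_{i,j} (λi+j+1)^{-μ}`, which converges
because `(λi+j+1)^2 ≥ (i+1)(j+1)` and `μ/2 > 1`.
-/

open Finset Real ProbabilityTheory

theorem ConvexOn.map_add_map_add_le {s : Set ℝ} {f : ℝ → ℝ} (hf : ConvexOn ℝ s f)
    {x y d : ℝ} (hx : x ∈ s) (hyd : y + d ∈ s) (hxy : x ≤ y) (hd : 0 ≤ d) :
    f y + f (x + d) ≤ f x + f (y + d) := by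
  rcases (add_nonneg (sub_nonneg.2 hxy) hd).eq_or_lt with hL | hL
  · obtain rfl : y = x := by linarith
    obtain rfl : d = 0 := by linarith
    exact le_rfl
  have hw : d / (y - x + d) + (y - x) / (y - x + d) = 1 := by field_simp; ring
  -- `y` and `x + d` are the convex combinations of `x` and `y + d` with swapped weights.
  have hy := hf.2 hx hyd (div_nonneg hd hL.le) (div_nonneg (sub_nonneg.2 hxy) hL.le) hw
  have hxd := hf.2 hx hyd (div_nonneg (sub_nonneg.2 hxy) hL.le) (div_nonneg hd hL.le)
    ((add_comm _ _).trans hw)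
  simp only [smul_eq_mul] at hy hxd
  rw [show d / (y - x + d) * x + (y - x) / (y - x + d) * (y + d) = y by field_simp; ring] at hy
  rw [show (y - x) / (y - x + d) * x + d / (y - x + d) * (y + d) = x + d by field_simp; ring] at hxd
  linear_combination hy + hxd + (f x + f (y + d)) * hw

theorem Real.Gamma_mul_Gamma_add_le {x y d : ℝ} (hx : 0 < x) (hxy : x ≤ y) (hd : 0 ≤ d) :
    Gamma y * Gamma (x + d) ≤ Gamma x * Gamma (y + d) := by
  have hy : 0 < y := hx.trans_le hxy
  have hΓ : ∀ {u : ℝ}, 0 < u → 0 < Gamma u := Gamma_pos_of_pos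
  rw [← log_le_log_iff (mul_pos (hΓ hy) (hΓ (by linarith))) (mul_pos (hΓ hx) (hΓ (by linarith))),
    log_mul (hΓ hy).ne' (hΓ (by linarith)).ne', log_mul (hΓ hx).ne' (hΓ (by linarith)).ne']
  exact convexOn_log_Gamma.map_add_map_add_le (f := log ∘ Gamma) hx
    (show 0 < y + d by linarith) hxy hd

namespace ProbabilityTheory

theorem beta_comm (a b : ℝ) : beta a b = beta b a := by
  rw [beta, beta, mul_comm, add_comm]

theorem beta_le_beta_left {s a b : ℝ} (hs : 0 < s) (hsa : s ≤ a) (hb : 0 < b) :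
    beta a b ≤ beta s b := by
  have hΓ : ∀ {u : ℝ}, 0 < u → 0 < Gamma u := Gamma_pos_of_pos
  rw [beta, beta, div_le_div_iff₀ (hΓ (by linarith)) (hΓ (by linarith))]
  linarith [mul_le_mul_of_nonneg_left (Gamma_mul_Gamma_add_le hs hsa hb.le) (hΓ hb).le]

theorem beta_le_beta {s t a b : ℝ} (hs : 0 < s) (ht : 0 < t) (hsa : s ≤ a) (htb : t ≤ b) :
    beta a b ≤ beta s t :=
  calc beta a b ≤ beta s b := beta_le_beta_left hs hsa (ht.trans_le htb)
    _ = beta b s := beta_comm s b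
    _ ≤ beta t s := beta_le_beta_left ht htb hs
    _ = beta s t := beta_comm t s

theorem beta_natCast_add_one (s t : ℕ) :
    beta (s + 1) (t + 1) = 1 / ((s + t + 1) * (s + t).choose s) := by
  have hst : (s : ℝ) + 1 + (t + 1) = ((s + t + 1 : ℕ) : ℝ) + 1 := by push_cast; ring
  rw [beta, hst, Gamma_nat_eq_factorial, Gamma_nat_eq_factorial, Gamma_nat_eq_factorial,
    Nat.factorial_succ, ← Nat.add_choose_mul_factorial_mul_factorial s t]
  push_cast
  field_simp
  rw [Nat.choose_symm_add]

end ProbabilityTheory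

theorem Real.Gamma_add_one_mul_Gamma_add_one_le {s t a b : ℝ} (hs : 0 ≤ s) (ht : 0 ≤ t)
    (hsa : s ≤ a) (htb : t ≤ b) :
    Gamma (a + 1) * Gamma (b + 1) ≤ (a + b + 1) * Gamma (a + b + 1) * beta (s + 1) (t + 1) := by
  have hab : 0 < a + b + 1 := by linarith
  have hΓ : Gamma (a + 1) * Gamma (b + 1) =
      (a + b + 1) * Gamma (a + b + 1) * beta (a + 1) (b + 1) := by
    rw [beta, show a + 1 + (b + 1) = a + b + 1 + 1 by ring, Gamma_add_one hab.ne']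
    field_simp [(Gamma_pos_of_pos hab).ne']
  rw [hΓ]
  exact mul_le_mul_of_nonneg_left (beta_le_beta (by linarith) (by linarith) (by linarith)
    (by linarith)) (mul_nonneg hab.le (Gamma_pos_of_pos hab).le)

theorem Nat.choose_mul_choose_le_add_choose (m n i j : ℕ) :
    m.choose i * n.choose j ≤ (m + n).choose (i + j) := by
  rw [Nat.add_choose_eq]
  exact single_le_sum (f := fun p : ℕ × ℕ => m.choose p.1 * n.choose p.2)
    (fun _ _ => Nat.zero_le _) (mem_antidiagonal.2 (rfl : (i, j).1 + (i, j).2 = i + j))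

theorem choose_mul_choose_mul_Gamma_le {lam : ℝ} (hlam : 1 ≤ lam) {n k i j : ℕ} (hin : i ≤ n)
    (hjk : j ≤ k) :
    k.choose j * n.choose i *
        (Gamma (lam * i + j + 1) * Gamma (lam * (n - i : ℕ) + (k - j : ℕ) + 1)) ≤
      lam * Gamma (lam * n + k + 1) := by
  set s := j + i
  set t := (n - i) + (k - j)
  have hst : k + n = s + t := by omega
  have hchoose : (k.choose j * n.choose i : ℝ) ≤ (s + t).choose s := by
    rw [← hst]
    exact_mod_cast Nat.choose_mul_choose_le_add_choose k n j i
  have hi : (i : ℝ) ≤ lam * i := le_mul_of_one_le_left i.cast_nonneg hlam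
  have hni : ((n - i : ℕ) : ℝ) ≤ lam * (n - i : ℕ) := le_mul_of_one_le_left (n - i).cast_nonneg hlam
  have hΓ := Gamma_add_one_mul_Gamma_add_one_le (s := s) (t := t) (a := lam * i + j)
    (b := lam * (n - i : ℕ) + (k - j : ℕ)) s.cast_nonneg t.cast_nonneg
    (by push_cast [s]; linarith) (by push_cast [t]; linarith)
  have hsum : lam * i + j + (lam * (n - i : ℕ) + (k - j : ℕ)) = lam * n + k := by
    push_cast [Nat.cast_sub hin, Nat.cast_sub hjk]; ring
  rw [beta_natCast_add_one, hsum] at hΓ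
  have hst' : (s : ℝ) + t + 1 = k + n + 1 := by exact_mod_cast congrArg (· + 1) hst.symm
  have hc : (0 : ℝ) < (s + t).choose s := by exact_mod_cast Nat.choose_pos (Nat.le_add_right s t)
  calc _ ≤ ((s + t).choose s : ℝ) *
        ((lam * n + k + 1) * Gamma (lam * n + k + 1) * (1 / ((s + t + 1) * (s + t).choose s))) :=
        mul_le_mul hchoose hΓ (by positivity) (by positivity)
    _ = (lam * n + k + 1) / (k + n + 1) * Gamma (lam * n + k + 1) := by
        rw [← hst']; field_simp
    _ ≤ lam * Gamma (lam * n + k + 1) := by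
        have := Gamma_pos_of_pos (show 0 < lam * n + k + 1 by positivity)
        gcongr
        rw [div_le_iff₀ (by positivity)]
        nlinarith [k.cast_nonneg (α := ℝ)]

theorem summable_one_div_mul_add_add_one_rpow {lam mu : ℝ} (hlam : 1 ≤ lam) (hmu : 2 < mu) :
    Summable fun p : ℕ × ℕ => 1 / (lam * p.1 + p.2 + 1) ^ mu := by
  have h := (summable_one_div_nat_add_rpow 1 (mu / 2)).2 (by linarith)
  refine (h.mul_of_nonneg h (fun _ => by positivity) (fun _ => by positivity)).of_nonneg_of_le
    (fun _ => by positivity) fun ⟨i, j⟩ => ?_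
  have hi : (0 : ℝ) ≤ i := i.cast_nonneg
  have hj : (0 : ℝ) ≤ j := j.cast_nonneg
  have hlami : (i : ℝ) ≤ lam * i := le_mul_of_one_le_left hi hlam
  rw [abs_of_pos (by positivity : (0 : ℝ) < i + 1), abs_of_pos (by positivity : (0 : ℝ) < j + 1),
    one_div_mul_one_div, ← mul_rpow (by positivity) (by positivity)]
  calc 1 / (lam * i + j + 1) ^ mu = 1 / ((lam * i + j + 1) ^ 2) ^ (mu / 2) := by
        rw [← rpow_natCast, ← rpow_mul (by positivity)]; ring_nf
    _ ≤ 1 / ((i + 1) * (j + 1)) ^ (mu / 2) := by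
        gcongr; nlinarith [mul_nonneg hi hj]

theorem add_add_one_rpow_div_le {mu x y : ℝ} (hmu : 0 ≤ mu) (hx : 0 ≤ x) (hy : 0 ≤ y) :
    (x + y + 1) ^ mu / ((x + 1) ^ mu * (y + 1) ^ mu) ≤
      2 ^ mu * (1 / (x + 1) ^ mu + 1 / (y + 1) ^ mu) := by
  wlog hxy : x ≤ y generalizing x y
  · have := this hy hx (le_of_not_ge hxy)
    rwa [add_comm (1 / _), mul_comm ((y + 1) ^ mu), add_comm y x] at this
  have hmax : (x + y + 1) ^ mu ≤ 2 ^ mu * (y + 1) ^ mu := by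
    rw [← mul_rpow (by norm_num) (by linarith)]
    gcongr
    linarith
  calc (x + y + 1) ^ mu / ((x + 1) ^ mu * (y + 1) ^ mu)
      ≤ 2 ^ mu * (y + 1) ^ mu / ((x + 1) ^ mu * (y + 1) ^ mu) := by gcongr
    _ = 2 ^ mu * (1 / (x + 1) ^ mu) := by field_simp
    _ ≤ 2 ^ mu * (1 / (x + 1) ^ mu + 1 / (y + 1) ^ mu) := by
        gcongr; exact le_add_of_nonneg_right (by positivity)

theorem sum_range_sum_range_reflect {M : Type*} [AddCommMonoid M] (g : ℕ → ℕ → M) (n k : ℕ) :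
    ∑ j ∈ range (k + 1), ∑ i ∈ range (n + 1), g (n - i) (k - j) =
      ∑ j ∈ range (k + 1), ∑ i ∈ range (n + 1), g i j := by
  have h := sum_range_reflect (fun j => ∑ i ∈ range (n + 1), g (n - i) j) (k + 1)
  have h' := fun j => sum_range_reflect (fun i => g i j) (n + 1)
  simp only [add_tsub_cancel_right] at h h'
  rw [h]
  exact sum_congr rfl fun j _ => h' j

theorem sum_range_sum_range_le_tsum {f : ℕ × ℕ → ℝ} (hf : Summable f) (hf0 : 0 ≤ f) (n k : ℕ) :
    ∑ j ∈ range (k + 1), ∑ i ∈ range (n + 1), f (i, j) ≤ ∑' p, f p := by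
  rw [sum_comm, ← sum_product']
  exact hf.sum_le_tsum _ fun p _ => hf0 p

theorem sum_range_sum_range_rpow_div_le {lam mu : ℝ} (hlam : 1 ≤ lam) (hmu : 2 < mu) (n k : ℕ) :
    ∑ j ∈ range (k + 1), ∑ i ∈ range (n + 1), (lam * n + k + 1) ^ mu /
        ((lam * i + j + 1) ^ mu * (lam * (n - i : ℕ) + (k - j : ℕ) + 1) ^ mu) ≤
      2 ^ mu * (2 * ∑' p : ℕ × ℕ, 1 / (lam * p.1 + p.2 + 1) ^ mu) := by
  set f : ℕ → ℕ → ℝ := fun i j => 1 / (lam * i + j + 1) ^ mu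
  have hterm : ∀ j ∈ range (k + 1), ∀ i ∈ range (n + 1), (lam * n + k + 1) ^ mu /
      ((lam * i + j + 1) ^ mu * (lam * (n - i : ℕ) + (k - j : ℕ) + 1) ^ mu) ≤
        2 ^ mu * (f i j + f (n - i) (k - j)) := by
    intro j hj i hi
    have hsum : lam * n + k + 1 = lam * i + j + (lam * (n - i : ℕ) + (k - j : ℕ)) + 1 := by
      push_cast [Nat.cast_sub (mem_range_succ_iff.1 hi), Nat.cast_sub (mem_range_succ_iff.1 hj)]
      ring
    rw [hsum]
    exact add_add_one_rpow_div_le (by linarith) (by positivity) (by positivity)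
  calc _ ≤ ∑ j ∈ range (k + 1), ∑ i ∈ range (n + 1), 2 ^ mu * (f i j + f (n - i) (k - j)) :=
        sum_le_sum fun j hj => sum_le_sum fun i hi => hterm j hj i hi
    _ = 2 ^ mu * (2 * ∑ j ∈ range (k + 1), ∑ i ∈ range (n + 1), f i j) := by
        simp only [← mul_sum, sum_add_distrib, sum_range_sum_range_reflect f]
        ring
    _ ≤ 2 ^ mu * (2 * ∑' p : ℕ × ℕ, 1 / (lam * p.1 + p.2 + 1) ^ mu) := by
        gcongr
        exact sum_range_sum_range_le_tsum (f := fun p => f p.1 p.2)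
          (summable_one_div_mul_add_add_one_rpow hlam hmu) (fun p => by positivity) n k

noncomputable def gevreyWeight (lam mu R R' : ℝ) (n k : ℕ) : ℝ :=
  Gamma (lam * n + k + 1) / (R ^ k * R' ^ (lam * n) * (lam * n + k + 1) ^ mu)

theorem gevreyWeight_pos {lam mu R R' : ℝ} (hlam : 0 ≤ lam) (hR : 0 < R) (hR' : 0 < R')
    (n k : ℕ) : 0 < gevreyWeight lam mu R R' n k :=
  div_pos (Gamma_pos_of_pos (by positivity)) (by positivity)

theorem choose_mul_choose_mul_gevreyWeight_le {lam mu R R' : ℝ} (hlam : 1 ≤ lam) (hR : 0 < R)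
    (hR' : 0 < R') {n k i j : ℕ} (hin : i ≤ n) (hjk : j ≤ k) :
    k.choose j * n.choose i *
        (gevreyWeight lam mu R R' i j * gevreyWeight lam mu R R' (n - i) (k - j)) ≤
      lam * gevreyWeight lam mu R R' n k * ((lam * n + k + 1) ^ mu /
        ((lam * i + j + 1) ^ mu * (lam * (n - i : ℕ) + (k - j : ℕ) + 1) ^ mu)) := by
  have hRk : R ^ j * R ^ (k - j) = R ^ k := by rw [← pow_add, Nat.add_sub_cancel' hjk]
  have hR'n : R' ^ (lam * i) * R' ^ (lam * (n - i : ℕ)) = R' ^ (lam * n) := by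
    rw [← rpow_add hR', Nat.cast_sub hin]; ring_nf
  have hD : 0 < R ^ k * R' ^ (lam * n) *
      ((lam * i + j + 1) ^ mu * (lam * (n - i : ℕ) + (k - j : ℕ) + 1) ^ mu) := by positivity
  calc _ = k.choose j * n.choose i *
        (Gamma (lam * i + j + 1) * Gamma (lam * (n - i : ℕ) + (k - j : ℕ) + 1)) /
          (R ^ k * R' ^ (lam * n) *
            ((lam * i + j + 1) ^ mu * (lam * (n - i : ℕ) + (k - j : ℕ) + 1) ^ mu)) := by
        rw [gevreyWeight, gevreyWeight, ← hRk, ← hR'n]; field_simp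
    _ ≤ lam * Gamma (lam * n + k + 1) / (R ^ k * R' ^ (lam * n) *
            ((lam * i + j + 1) ^ mu * (lam * (n - i : ℕ) + (k - j : ℕ) + 1) ^ mu)) :=
        div_le_div_of_nonneg_right (choose_mul_choose_mul_Gamma_le hlam hin hjk) hD.le
    _ = _ := by rw [gevreyWeight]; field_simp

theorem abs_choose_mul_choose_mul_mul_le {lam mu R R' C₁ C₂ a b : ℝ} (hlam : 1 ≤ lam)
    (hR : 0 < R) (hR' : 0 < R') (hC₁ : 0 ≤ C₁) (hC₂ : 0 ≤ C₂) {n k i j : ℕ} (hin : i ≤ n)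
    (hjk : j ≤ k) (ha : |a| ≤ C₁ * gevreyWeight lam mu R R' i j)
    (hb : |b| ≤ C₂ * gevreyWeight lam mu R R' (n - i) (k - j)) :
    |k.choose j * n.choose i * a * b| ≤
      C₁ * C₂ * (lam * gevreyWeight lam mu R R' n k * ((lam * n + k + 1) ^ mu /
        ((lam * i + j + 1) ^ mu * (lam * (n - i : ℕ) + (k - j : ℕ) + 1) ^ mu))) := by
  calc _ = k.choose j * n.choose i * (|a| * |b|) := by simp only [abs_mul, Nat.abs_cast]; ring
    _ ≤ k.choose j * n.choose i *
          ((C₁ * gevreyWeight lam mu R R' i j) * (C₂ * gevreyWeight lam mu R R' (n - i) (k - j))) :=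
        mul_le_mul_of_nonneg_left (mul_le_mul ha hb (abs_nonneg _) ((abs_nonneg _).trans ha))
          (by positivity)
    _ = C₁ * C₂ * (k.choose j * n.choose i *
          (gevreyWeight lam mu R R' i j * gevreyWeight lam mu R R' (n - i) (k - j))) := by ring
    _ ≤ _ := mul_le_mul_of_nonneg_left
        (choose_mul_choose_mul_gevreyWeight_le hlam hR hR' hin hjk) (by positivity)

theorem gevrey_leibniz_algebra (lam mu R R' C₁ C₂ : ℝ)
    (hlam : 1 ≤ lam) (hmu : 2 < mu) (hR : 0 < R) (hR' : 0 < R')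
    (hC₁ : 0 < C₁) (hC₂ : 0 < C₂) (k₀ n₀ : ℕ) (d₁ d₂ : ℕ → ℕ → ℝ)
    (h₁ : ∀ n ≤ n₀, ∀ k ≤ k₀, |d₁ n k| ≤
      C₁ * Real.Gamma (lam * n + k + 1) /
        (R ^ k * R' ^ (lam * n) * (lam * n + k + 1) ^ mu))
    (h₂ : ∀ n ≤ n₀, ∀ k ≤ k₀, |d₂ n k| ≤
      C₂ * Real.Gamma (lam * n + k + 1) /
        (R ^ k * R' ^ (lam * n) * (lam * n + k + 1) ^ mu)) :
    ∀ n ≤ n₀, ∀ k ≤ k₀,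
      |∑ j ∈ Finset.range (k + 1), ∑ i ∈ Finset.range (n + 1),
          (k.choose j : ℝ) * (n.choose i : ℝ) * d₁ i j * d₂ (n - i) (k - j)| ≤
        (2 * lam * 2 ^ mu * ∑' p : ℕ × ℕ, 1 / (lam * p.1 + p.2 + 1) ^ mu) *
          C₁ * C₂ * Real.Gamma (lam * n + k + 1) /
            (R ^ k * R' ^ (lam * n) * (lam * n + k + 1) ^ mu) := by
  intro n hn k hk
  have hW := gevreyWeight_pos (mu := mu) (zero_le_one.trans hlam) hR hR' n k
  calc _ ≤ ∑ j ∈ range (k + 1), ∑ i ∈ range (n + 1),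
        C₁ * C₂ * (lam * gevreyWeight lam mu R R' n k * ((lam * n + k + 1) ^ mu /
          ((lam * i + j + 1) ^ mu * (lam * (n - i : ℕ) + (k - j : ℕ) + 1) ^ mu))) := by
        refine (abs_sum_le_sum_abs _ _).trans <| sum_le_sum fun j hj =>
          (abs_sum_le_sum_abs _ _).trans <| sum_le_sum fun i hi => ?_
        have hin := mem_range_succ_iff.1 hi
        have hjk := mem_range_succ_iff.1 hj
        exact abs_choose_mul_choose_mul_mul_le hlam hR hR' hC₁.le hC₂.le hin hjk
          ((h₁ i (hin.trans hn) j (hjk.trans hk)).trans_eq (mul_div_assoc _ _ _))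
          ((h₂ _ ((n.sub_le i).trans hn) _ ((k.sub_le j).trans hk)).trans_eq (mul_div_assoc _ _ _))
    _ = C₁ * C₂ * lam * gevreyWeight lam mu R R' n k *
          ∑ j ∈ range (k + 1), ∑ i ∈ range (n + 1), (lam * n + k + 1) ^ mu /
            ((lam * i + j + 1) ^ mu * (lam * (n - i : ℕ) + (k - j : ℕ) + 1) ^ mu) := by
        simp only [mul_sum, mul_assoc]
    _ ≤ C₁ * C₂ * lam * gevreyWeight lam mu R R' n k *
          (2 ^ mu * (2 * ∑' p : ℕ × ℕ, 1 / (lam * p.1 + p.2 + 1) ^ mu)) :=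
        mul_le_mul_of_nonneg_left (sum_range_sum_range_rpow_div_le hlam hmu n k) (by positivity)
    _ = _ := by rw [gevreyWeight]; ring
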